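/- arXiv:2012.12667 — 5 statements merged into one kernel-verified Lean document; each statement's English description precedes it below -/
import Mathlib

section
/- For Gaussian functions u(x) = α e^{-β|x|^2} with β > 0 and α ∈ C nonzero, equality holds in the second-order Heisenberg uncertainty principle: (∫_{R^N} |Δu|^2 dx)(∫_{R^N} |x|^2 |∇u|^2 dx) = ((N+2)^2/4)(∫_{R^N} |∇u|^2 dx)^2. -/
open MeasureTheory

/-- `i`-th partial derivative of a complex-valued function on `ℝ^N`. -/
noncomputable def pd {N : ℕ} (u : EuclideanSpace ℝ (Fin N) → ℂ) (i : Fin N) :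
    EuclideanSpace ℝ (Fin N) → ℂ :=
  fun x => fderiv ℝ u x (EuclideanSpace.single i 1)

/-- Laplacian of a complex-valued function on `ℝ^N`. -/
noncomputable def lap {N : ℕ} (u : EuclideanSpace ℝ (Fin N) → ℂ) :
    EuclideanSpace ℝ (Fin N) → ℂ :=
  fun x => ∑ i, pd (pd u i) i x

/-- Squared Euclidean norm of the gradient of `u`. -/
noncomputable def gradNormSq {N : ℕ} (u : EuclideanSpace ℝ (Fin N) → ℂ) :
    EuclideanSpace ℝ (Fin N) → ℝ :=
  fun x => ∑ i, ‖pd u i x‖ ^ 2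

/-! Since `∇u = -2βx u` and `Δu = 2β(2β|x|² - N) u`, each of the three integrals is a
combination of radial moments `Mₙ = ∫ |x|ⁿ e^{-2β|x|²}`. In polar coordinates `Mₙ` is a Gamma
integral, and `Γ(s + 1) = s Γ(s)` gives `Mₙ₊₂ = (N + n)/(4β) Mₙ`; expressed through `M₀`, both
sides equal `|α|⁴ β² N² (N + 2)² M₀² / 4`. -/

open Real

section GaussianMoments

variable {E : Type*} [NormedAddCommGroup E] [NormedSpace ℝ E] [Nontrivial E]
  [FiniteDimensional ℝ E] [MeasurableSpace E] [BorelSpace E]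
  (μ : Measure E) [μ.IsAddHaarMeasure]

lemma pow_smul_pow_mul_exp_neg_mul_sq_eq_rpow (d n : ℕ) (c y : ℝ) :
    y ^ d • (y ^ n * rexp (-c * y ^ 2)) = y ^ ((d + n : ℕ) : ℝ) * rexp (-c * y ^ (2 : ℝ)) := by
  rw [smul_eq_mul, ← mul_assoc, ← pow_add, rpow_natCast, rpow_two]

lemma integrable_norm_pow_mul_exp_neg_mul_sq (n : ℕ) {c : ℝ} (hc : 0 < c) :
    Integrable (fun x : E => ‖x‖ ^ n * rexp (-c * ‖x‖ ^ 2)) μ := by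
  refine (integrable_fun_norm_addHaar μ (f := fun y => y ^ n * rexp (-c * y ^ 2))).2 ?_
  simp_rw [pow_smul_pow_mul_exp_neg_mul_sq_eq_rpow]
  exact integrableOn_rpow_mul_exp_neg_mul_rpow (neg_one_lt_zero.trans_le (Nat.cast_nonneg _))
    two_pos hc

lemma integral_norm_pow_mul_exp_neg_mul_sq (n : ℕ) {c : ℝ} (hc : 0 < c) :
    ∫ x, ‖x‖ ^ n * rexp (-c * ‖x‖ ^ 2) ∂μ =
      Module.finrank ℝ E * μ.real (Metric.ball 0 1) *
        (c ^ (-((Module.finrank ℝ E + n : ℝ) / 2)) / 2 *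
          Gamma ((Module.finrank ℝ E + n : ℝ) / 2)) := by
  have hd := Module.finrank_pos (R := ℝ) (M := E)
  have hexp : ((Module.finrank ℝ E - 1 + n : ℕ) : ℝ) + 1 = Module.finrank ℝ E + n := by
    push_cast [Nat.cast_sub hd]; ring
  rw [integral_fun_norm_addHaar μ (fun y => y ^ n * rexp (-c * y ^ 2))]
  simp_rw [pow_smul_pow_mul_exp_neg_mul_sq_eq_rpow]
  rw [integral_rpow_mul_exp_neg_mul_rpow two_pos (neg_one_lt_zero.trans_le (Nat.cast_nonneg _)) hc,
    hexp, nsmul_eq_mul, smul_eq_mul]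
  ring_nf

lemma integral_norm_pow_add_two_mul_exp_neg_mul_sq (n : ℕ) {c : ℝ} (hc : 0 < c) :
    ∫ x, ‖x‖ ^ (n + 2) * rexp (-c * ‖x‖ ^ 2) ∂μ =
      (Module.finrank ℝ E + n) / (2 * c) * ∫ x, ‖x‖ ^ n * rexp (-c * ‖x‖ ^ 2) ∂μ := by
  set s : ℝ := (Module.finrank ℝ E + n) / 2
  have hs : 0 < s := by have := Module.finrank_pos (R := ℝ) (M := E); positivity
  have hs' : (Module.finrank ℝ E + (n + 2 : ℕ) : ℝ) / 2 = s + 1 := by push_cast; ring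
  rw [integral_norm_pow_mul_exp_neg_mul_sq μ _ hc, integral_norm_pow_mul_exp_neg_mul_sq μ _ hc, hs',
    Gamma_add_one hs.ne', neg_add, rpow_add hc, rpow_neg_one]
  field_simp
  ring

lemma integral_norm_sq_mul_exp_neg_mul_sq {c : ℝ} (hc : 0 < c) :
    ∫ x, ‖x‖ ^ 2 * rexp (-c * ‖x‖ ^ 2) ∂μ =
      Module.finrank ℝ E / (2 * c) * ∫ x, rexp (-c * ‖x‖ ^ 2) ∂μ := by
  simpa using integral_norm_pow_add_two_mul_exp_neg_mul_sq μ 0 hc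

lemma integral_norm_pow_four_mul_exp_neg_mul_sq {c : ℝ} (hc : 0 < c) :
    ∫ x, ‖x‖ ^ 4 * rexp (-c * ‖x‖ ^ 2) ∂μ =
      Module.finrank ℝ E * (Module.finrank ℝ E + 2) / (2 * c) ^ 2 *
        ∫ x, rexp (-c * ‖x‖ ^ 2) ∂μ := by
  rw [integral_norm_pow_add_two_mul_exp_neg_mul_sq μ 2 hc, integral_norm_sq_mul_exp_neg_mul_sq μ hc]
  field_simp
  push_cast
  ring

lemma integral_mul_norm_sq_sub_finrank_sq_mul_exp_neg_mul_sq {c : ℝ} (hc : 0 < c) :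
    ∫ x, (c * ‖x‖ ^ 2 - Module.finrank ℝ E) ^ 2 * rexp (-c * ‖x‖ ^ 2) ∂μ =
      Module.finrank ℝ E * (Module.finrank ℝ E + 2) / 4 * ∫ x, rexp (-c * ‖x‖ ^ 2) ∂μ := by
  set d : ℝ := (Module.finrank ℝ E : ℝ)
  have hexpand : ∀ x : E, (c * ‖x‖ ^ 2 - d) ^ 2 * rexp (-c * ‖x‖ ^ 2) =
      c ^ 2 * (‖x‖ ^ 4 * rexp (-c * ‖x‖ ^ 2)) - 2 * c * d * (‖x‖ ^ 2 * rexp (-c * ‖x‖ ^ 2)) +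
        d ^ 2 * rexp (-c * ‖x‖ ^ 2) := fun x => by ring
  have hint : ∀ n, Integrable (fun x : E => ‖x‖ ^ n * rexp (-c * ‖x‖ ^ 2)) μ :=
    fun n => integrable_norm_pow_mul_exp_neg_mul_sq μ n hc
  have hint0 : Integrable (fun x : E => rexp (-c * ‖x‖ ^ 2)) μ := by simpa using hint 0
  simp_rw [hexpand]
  rw [integral_add (((hint 4).const_mul _).sub' ((hint 2).const_mul _)) (hint0.const_mul _),
    integral_sub ((hint 4).const_mul _) ((hint 2).const_mul _), integral_const_mul,
    integral_const_mul, integral_const_mul, integral_norm_pow_four_mul_exp_neg_mul_sq μ hc,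
    integral_norm_sq_mul_exp_neg_mul_sq μ hc]
  field_simp
  ring

end GaussianMoments

section Gaussian

variable {F : Type*} [NormedAddCommGroup F]

noncomputable def gaussian (α : ℂ) (β : ℝ) (x : F) : ℂ :=
  α * Complex.exp (-(β : ℂ) * ((‖x‖ : ℂ)) ^ 2)

lemma norm_sq_gaussian (α : ℂ) (β : ℝ) (x : F) :
    ‖gaussian α β x‖ ^ 2 = ‖α‖ ^ 2 * rexp (-(2 * β) * ‖x‖ ^ 2) := by
  have : -(β : ℂ) * ((‖x‖ : ℂ)) ^ 2 = ((-β * ‖x‖ ^ 2 : ℝ) : ℂ) := by push_cast; ring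
  rw [gaussian, norm_mul, this, Complex.norm_exp_ofReal, mul_pow, sq (rexp _), ← exp_add]
  ring_nf

lemma hasFDerivAt_gaussian [InnerProductSpace ℝ F] (α : ℂ) (β : ℝ) (x : F) :
    HasFDerivAt (gaussian α β)
      ((-2 * β * gaussian α β x) • Complex.ofRealCLM.comp (innerSL ℝ x)) x := by
  have hsq := Complex.ofRealCLM.hasFDerivAt.comp x (hasStrictFDerivAt_norm_sq x).hasFDerivAt
  have h := ((hsq.const_mul (-(β : ℂ))).cexp).const_mul α
  refine (h.congr_fderiv ?_).congr_of_eventuallyEq (.of_forall fun y => by simp [gaussian])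
  ext v
  simp only [gaussian, Function.comp_apply, Complex.ofRealCLM_apply, Complex.ofReal_pow,
    ContinuousLinearMap.comp_smul, smul_apply, ContinuousLinearMap.comp_apply, coe_innerSL_apply,
    nsmul_eq_mul, Nat.cast_ofNat, smul_eq_mul]
  ring

lemma differentiable_gaussian [InnerProductSpace ℝ F] (α : ℂ) (β : ℝ) :
    Differentiable ℝ (gaussian α β : F → ℂ) :=
  fun x => (hasFDerivAt_gaussian α β x).differentiableAt

end Gaussian

section Euclidean

variable {N : ℕ}

lemma pd_eq_of_hasFDerivAt {u : EuclideanSpace ℝ (Fin N) → ℂ}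
    {L : EuclideanSpace ℝ (Fin N) →L[ℝ] ℂ} {x : EuclideanSpace ℝ (Fin N)}
    (h : HasFDerivAt u L x) (i : Fin N) : pd u i x = L (EuclideanSpace.single i 1) := by
  rw [pd, h.fderiv]

lemma pd_fun_mul {f g : EuclideanSpace ℝ (Fin N) → ℂ} {x : EuclideanSpace ℝ (Fin N)}
    (hf : DifferentiableAt ℝ f x) (hg : DifferentiableAt ℝ g x) (i : Fin N) :
    pd (fun y => f y * g y) i x = pd f i x * g x + f x * pd g i x := by
  simp only [pd, fderiv_fun_mul hf hg, add_apply, smul_apply, smul_eq_mul]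
  ring

lemma pd_ofReal_coord (i : Fin N) (x : EuclideanSpace ℝ (Fin N)) :
    pd (fun y : EuclideanSpace ℝ (Fin N) => (y i : ℂ)) i x = 1 :=
  (pd_eq_of_hasFDerivAt (Complex.ofRealCLM.comp (EuclideanSpace.proj i)).hasFDerivAt i).trans
    (by simp)

lemma pd_gaussian (α : ℂ) (β : ℝ) (i : Fin N) :
    pd (gaussian α β) i = fun x => (x i : ℂ) * gaussian (-2 * β * α) β x := by
  ext x
  rw [pd_eq_of_hasFDerivAt (hasFDerivAt_gaussian α β x)]
  simp only [gaussian, smul_apply, ContinuousLinearMap.comp_apply, coe_innerSL_apply,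
    EuclideanSpace.inner_single_right, ringHom_apply, one_mul, Complex.ofRealCLM_apply, smul_eq_mul]
  ring

lemma pd_pd_gaussian (α : ℂ) (β : ℝ) (i : Fin N) (x : EuclideanSpace ℝ (Fin N)) :
    pd (pd (gaussian α β) i) i x = ((4 * β ^ 2 * x i ^ 2 - 2 * β : ℝ) : ℂ) * gaussian α β x := by
  rw [pd_gaussian, pd_fun_mul (by fun_prop) (differentiable_gaussian _ _ x), pd_ofReal_coord,
    pd_gaussian]
  simp only [gaussian]
  push_cast
  ring

lemma lap_gaussian (α : ℂ) (β : ℝ) (x : EuclideanSpace ℝ (Fin N)) :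
    lap (gaussian α β) x = ((2 * β * (2 * β * ‖x‖ ^ 2 - N) : ℝ) : ℂ) * gaussian α β x := by
  simp only [lap, pd_pd_gaussian, ← Finset.sum_mul, ← Complex.ofReal_sum, Finset.sum_sub_distrib,
    ← Finset.mul_sum, EuclideanSpace.real_norm_sq_eq, Finset.sum_const, Finset.card_univ,
    Fintype.card_fin, nsmul_eq_mul]
  ring_nf

lemma gradNormSq_gaussian (α : ℂ) (β : ℝ) (x : EuclideanSpace ℝ (Fin N)) :
    gradNormSq (gaussian α β) x = (2 * β) ^ 2 * ‖x‖ ^ 2 * ‖gaussian α β x‖ ^ 2 := by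
  simp only [gradNormSq, pd_gaussian, gaussian, norm_mul, mul_pow, Complex.norm_real,
    Real.norm_eq_abs, sq_abs, ← Finset.sum_mul, EuclideanSpace.real_norm_sq_eq, norm_neg,
    Complex.norm_ofNat, neg_mul]
  ring

lemma integral_gradNormSq_gaussian (α : ℂ) (β : ℝ) :
    ∫ x : EuclideanSpace ℝ (Fin N), gradNormSq (gaussian α β) x =
      (2 * β) ^ 2 * ‖α‖ ^ 2 *
        ∫ x : EuclideanSpace ℝ (Fin N), ‖x‖ ^ 2 * rexp (-(2 * β) * ‖x‖ ^ 2) := by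
  rw [← integral_const_mul]
  congr 1 with x
  rw [gradNormSq_gaussian, norm_sq_gaussian]
  ring

lemma integral_norm_sq_mul_gradNormSq_gaussian (α : ℂ) (β : ℝ) :
    ∫ x : EuclideanSpace ℝ (Fin N), ‖x‖ ^ 2 * gradNormSq (gaussian α β) x =
      (2 * β) ^ 2 * ‖α‖ ^ 2 *
        ∫ x : EuclideanSpace ℝ (Fin N), ‖x‖ ^ 4 * rexp (-(2 * β) * ‖x‖ ^ 2) := by
  rw [← integral_const_mul]
  congr 1 with x
  rw [gradNormSq_gaussian, norm_sq_gaussian]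
  ring

lemma integral_norm_lap_gaussian_sq (α : ℂ) (β : ℝ) :
    ∫ x : EuclideanSpace ℝ (Fin N), ‖lap (gaussian α β) x‖ ^ 2 =
      (2 * β) ^ 2 * ‖α‖ ^ 2 * ∫ x : EuclideanSpace ℝ (Fin N),
        (2 * β * ‖x‖ ^ 2 - N) ^ 2 * rexp (-(2 * β) * ‖x‖ ^ 2) := by
  rw [← integral_const_mul]
  congr 1 with x
  rw [lap_gaussian, norm_mul, Complex.norm_real, Real.norm_eq_abs, mul_pow, sq_abs,
    norm_sq_gaussian]
  ring

end Euclidean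

theorem second_order_HUP_gaussian_equality_general {N : ℕ} (hN : 1 ≤ N)
    (α : ℂ) (β : ℝ) (hβ : 0 < β)
    (u : EuclideanSpace ℝ (Fin N) → ℂ)
    (hu : u = fun x => α * Complex.exp (-(β : ℂ) * ((‖x‖ : ℂ)) ^ 2)) :
    (∫ x, ‖lap u x‖ ^ 2) * (∫ x, ‖x‖ ^ 2 * gradNormSq u x) =
      ((N : ℝ) + 2) ^ 2 / 4 * (∫ x, gradNormSq u x) ^ 2 := by
  obtain rfl : u = gaussian α β := hu
  have : NeZero N := ⟨by omega⟩
  have hc : 0 < 2 * β := by positivity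
  have hlap := integral_mul_norm_sq_sub_finrank_sq_mul_exp_neg_mul_sq
    (volume : Measure (EuclideanSpace ℝ (Fin N))) hc
  have hM2 := integral_norm_sq_mul_exp_neg_mul_sq (volume : Measure (EuclideanSpace ℝ (Fin N))) hc
  have hM4 := integral_norm_pow_four_mul_exp_neg_mul_sq
    (volume : Measure (EuclideanSpace ℝ (Fin N))) hc
  rw [finrank_euclideanSpace_fin] at hlap hM2 hM4
  rw [integral_norm_lap_gaussian_sq, hlap, integral_norm_sq_mul_gradNormSq_gaussian, hM4,
    integral_gradNormSq_gaussian, hM2]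
  field_simp

theorem second_order_HUP_gaussian_equality {N : ℕ} (hN : 1 ≤ N)
    (α : ℂ) (hα : α ≠ 0) (β : ℝ) (hβ : 0 < β)
    (u : EuclideanSpace ℝ (Fin N) → ℂ)
    (hu : u = fun x => α * Complex.exp (-(β : ℂ) * ((‖x‖ : ℂ)) ^ 2)) :
    (∫ x, ‖lap u x‖ ^ 2) * (∫ x, ‖x‖ ^ 2 * gradNormSq u x) =
      ((N : ℝ) + 2) ^ 2 / 4 * (∫ x, gradNormSq u x) ^ 2 :=
  second_order_HUP_gaussian_equality_general hN α β hβ u hu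
end

section
/- For every integer N ≥ 2, the infimum over nonnegative integers k of (1 − 8k/(N+2k)^2) · ((N+2k+2)^2/4) equals (N+2)^2/4, and it is attained at k = 0. -/
theorem inf_S_eq (N : ℕ) (hN : 2 ≤ N) :
    (∀ k : ℕ, ((N : ℝ) + 2) ^ 2 / 4 ≤
        (1 - 8 * k / ((N : ℝ) + 2 * k) ^ 2) * (((N : ℝ) + 2 * k + 2) ^ 2 / 4)) ∧
      (1 - 8 * (0 : ℕ) / ((N : ℝ) + 2 * (0 : ℕ)) ^ 2) *
          (((N : ℝ) + 2 * (0 : ℕ) + 2) ^ 2 / 4) = ((N : ℝ) + 2) ^ 2 / 4 := by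
  have hN' : (2:ℝ) ≤ (N:ℝ) := by exact_mod_cast hN
  constructor
  · intro k
    have hk : (0:ℝ) ≤ (k:ℝ) := Nat.cast_nonneg k
    have hm : (0:ℝ) < ((N:ℝ) + 2 * k) := by linarith
    have hm2 : (0:ℝ) < ((N:ℝ) + 2 * k) ^ 2 := by positivity
    have h : (1 - 8 * (k:ℝ) / ((N : ℝ) + 2 * k) ^ 2)
        = (((N:ℝ) + 2 * k) ^ 2 - 8 * k) / ((N:ℝ) + 2 * k) ^ 2 := by
      field_simp
    have hkk : 0 ≤ (k:ℝ) * ((k:ℝ) - 1) := by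
      rcases Nat.eq_zero_or_pos k with h0 | h1
      · simp [h0]
      · have : (1:ℝ) ≤ (k:ℝ) := by exact_mod_cast h1
        nlinarith
    rw [h, div_mul_eq_mul_div, div_le_div_iff₀ (by norm_num) hm2]
    nlinarith [hkk, mul_nonneg hkk hk, mul_nonneg hkk (sub_nonneg.2 hN'),
      mul_nonneg (mul_nonneg hkk hk) (sub_nonneg.2 hN'), mul_nonneg hkk hkk,
      mul_nonneg hkk (mul_nonneg hk hk), mul_nonneg hk (mul_nonneg hk hk), mul_nonneg hk hk,
      mul_nonneg hk (sub_nonneg.2 hN'), mul_nonneg (mul_nonneg hk hk) (sub_nonneg.2 hN'),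
      mul_nonneg (mul_nonneg hk (mul_nonneg hk hk)) (sub_nonneg.2 hN'),
      mul_nonneg (mul_nonneg hk hk) (mul_nonneg hk hk)]
  · norm_num
end

section
/- For every integer N ≥ 5, the infimum over nonnegative integers k of ((N+2k+1)^2/4) · (N+2k−3)^4 / ((N+2k−3)^2 + 4k)^2 equals (N+1)^2/4, and it is attained at k = 0. -/
theorem inf_hydrogen_eq (N : ℕ) (hN : 5 ≤ N) :
    (∀ k : ℕ, ((N : ℝ) + 1) ^ 2 / 4 ≤
        ((N : ℝ) + 2 * k + 1) ^ 2 / 4 * ((N : ℝ) + 2 * k - 3) ^ 4 /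
          (((N : ℝ) + 2 * k - 3) ^ 2 + 4 * k) ^ 2) ∧
      ((N : ℝ) + 2 * (0 : ℕ) + 1) ^ 2 / 4 * ((N : ℝ) + 2 * (0 : ℕ) - 3) ^ 4 /
          (((N : ℝ) + 2 * (0 : ℕ) - 3) ^ 2 + 4 * (0 : ℕ)) ^ 2 = ((N : ℝ) + 1) ^ 2 / 4 := by
  have hx : (5 : ℝ) ≤ (N : ℝ) := by exact_mod_cast hN
  constructor
  · intro k
    set x : ℝ := (N : ℝ)
    have hk : (0 : ℝ) ≤ (k : ℝ) := Nat.cast_nonneg k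
    have hm : (2 : ℝ) ≤ x + 2 * k - 3 := by linarith
    have hD : (0 : ℝ) < ((x + 2 * k - 3) ^ 2 + 4 * k) ^ 2 := by positivity
    rw [div_le_div_iff₀ (by norm_num) (by positivity)]
    have h1 : (x + 1) * ((x + 2 * k - 3) ^ 2 + 4 * k) ≤
        (x + 2 * k + 1) * (x + 2 * k - 3) ^ 2 := by
      rcases Nat.eq_zero_or_pos k with hk0 | hk1
      · subst hk0; push_cast; ring_nf; nlinarith [sq_nonneg (x - 3)]
      · have hk1' : (1 : ℝ) ≤ (k : ℝ) := by exact_mod_cast hk1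
        have h0 : 2 * (x + 1) ≤ (x + 2 * k - 3) ^ 2 := by
          nlinarith [sq_nonneg (x - 5), mul_nonneg hk hk]
        nlinarith [mul_nonneg hk (sub_nonneg.2 h0)]
    have h2 : (0 : ℝ) ≤ (x + 1) * ((x + 2 * k - 3) ^ 2 + 4 * k) := by positivity
    nlinarith [mul_self_le_mul_self h2 h1, sq_nonneg (x + 2 * k - 3)]
  · have h3 : ((N : ℝ) - 3) ≠ 0 := by intro h; linarith [hx, sub_eq_zero.1 h]
    push_cast
    field_simp
    ring
end

section
/- For every real x ≥ 1 and integer N ≥ 5, the function f(x) = ((N+2x+1)^2/4) · (N+2x−3)^4 / ((N+2x−3)^2 + 4x)^2 is nondecreasing in x on [1,∞). -/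
/-!
Put `u = N + 2x - 3` and `c = N - 3`, so that `4x = 2(u - c)` and `x ≥ 1` becomes `u ≥ c + 2`.
Then `f(x) = φ(u)² / 4` with `φ(u) = (u + 4) u² / (u² + 2u - 2c)`, and `u` is increasing in `x`,
so it suffices that `φ` is nonnegative and nondecreasing on `[c + 2, ∞)`. The numerator of
`φ(v) - φ(u)` factors as `(v - u) Q(u, v)` with a polynomial `Q` that is visibly nonnegative
for `c + 2 ≤ u ≤ v`.
-/

open Set

noncomputable def hydrogenRatio (c u : ℝ) : ℝ :=
  (u + 4) * u ^ 2 / (u ^ 2 + 2 * u - 2 * c)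

section

variable {c u v : ℝ}

lemma hydrogenRatio_denom_pos (hu : c + 2 ≤ u) : 0 < u ^ 2 + 2 * u - 2 * c := by
  nlinarith

lemma hydrogenRatio_nonneg (hc : 0 ≤ c) (hu : c + 2 ≤ u) : 0 ≤ hydrogenRatio c u :=
  have hu0 : 0 ≤ u := by linarith
  div_nonneg (by positivity) (hydrogenRatio_denom_pos hu).le

lemma hydrogenRatio_cross_sub (c u v : ℝ) :
    (v + 4) * v ^ 2 * (u ^ 2 + 2 * u - 2 * c) - (u + 4) * u ^ 2 * (v ^ 2 + 2 * v - 2 * c) =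
      (v - u) * (u ^ 2 * v ^ 2 + 2 * u * v * (u + v) + 8 * u * v
        - 2 * c * (u ^ 2 + u * v + v ^ 2) - 8 * c * (u + v)) := by
  ring

/-- Each positive term dominates a negative one: `u² v² ≥ 6c v² ≥ 2c(u² + uv + v²)` because
`u² ≥ (c + 2)² ≥ 6c`, and `2uv(u + v) ≥ 8c(u + v)` because `uv ≥ (c + 2)² ≥ 4c`. -/
lemma hydrogenRatio_cross_factor_nonneg (hc : 0 ≤ c) (hu : c + 2 ≤ u) (huv : u ≤ v) :
    0 ≤ u ^ 2 * v ^ 2 + 2 * u * v * (u + v) + 8 * u * v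
        - 2 * c * (u ^ 2 + u * v + v ^ 2) - 8 * c * (u + v) := by
  have hu0 : 0 ≤ u := by linarith
  have hsq : 6 * c ≤ u ^ 2 := by nlinarith [sq_nonneg (c - 1)]
  have hprod : 4 * c ≤ u * v := by nlinarith [sq_nonneg c]
  have hquad : 2 * c * (u ^ 2 + u * v + v ^ 2) ≤ 6 * c * v ^ 2 := by
    have : u ^ 2 + u * v + v ^ 2 ≤ 3 * v ^ 2 := by nlinarith
    nlinarith [mul_le_mul_of_nonneg_left this hc]
  have hmixed : 8 * c * (u + v) ≤ 2 * u * v * (u + v) := by nlinarith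
  have hquartic : 6 * c * v ^ 2 ≤ u ^ 2 * v ^ 2 := mul_le_mul_of_nonneg_right hsq (sq_nonneg v)
  nlinarith [mul_nonneg hu0 (hu0.trans huv)]

lemma monotoneOn_hydrogenRatio (hc : 0 ≤ c) : MonotoneOn (hydrogenRatio c) (Ici (c + 2)) := by
  intro u hu v hv huv
  rw [mem_Ici] at hu hv
  rw [hydrogenRatio, hydrogenRatio,
    div_le_div_iff₀ (hydrogenRatio_denom_pos hu) (hydrogenRatio_denom_pos hv), ← sub_nonneg,
    hydrogenRatio_cross_sub]
  exact mul_nonneg (sub_nonneg.mpr huv) (hydrogenRatio_cross_factor_nonneg hc hu huv)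

lemma monotoneOn_hydrogenRatio_sq (hc : 0 ≤ c) :
    MonotoneOn (fun u => hydrogenRatio c u ^ 2) (Ici (c + 2)) :=
  fun _ hu _ hv huv =>
    pow_le_pow_left₀ (hydrogenRatio_nonneg hc hu) (monotoneOn_hydrogenRatio hc hu hv huv) 2

end

theorem monotone_hydrogen_f (N : ℕ) (hN : 5 ≤ N) :
    MonotoneOn
      (fun x : ℝ =>
        ((N : ℝ) + 2 * x + 1) ^ 2 / 4 * ((N : ℝ) + 2 * x - 3) ^ 4 /
          (((N : ℝ) + 2 * x - 3) ^ 2 + 4 * x) ^ 2)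
      (Set.Ici (1 : ℝ)) := by
  have hc : (0 : ℝ) ≤ N - 3 := by
    have : (5 : ℝ) ≤ N := by exact_mod_cast hN
    linarith
  have hshift : MonotoneOn (fun x : ℝ => (N : ℝ) + 2 * x - 3) (Ici 1) :=
    fun _ _ _ _ hxy => by dsimp only; linarith
  have hmaps : MapsTo (fun x : ℝ => (N : ℝ) + 2 * x - 3) (Ici 1) (Ici ((N - 3) + 2)) :=
    fun x hx => by rw [mem_Ici] at hx ⊢; linarith
  have hf : ∀ x : ℝ, ((N : ℝ) + 2 * x + 1) ^ 2 / 4 * ((N : ℝ) + 2 * x - 3) ^ 4 /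
      (((N : ℝ) + 2 * x - 3) ^ 2 + 4 * x) ^ 2 =
        hydrogenRatio (N - 3) ((N : ℝ) + 2 * x - 3) ^ 2 / 4 := by
    intro x
    have hdenom : ((N : ℝ) + 2 * x - 3) ^ 2 + 2 * ((N : ℝ) + 2 * x - 3) - 2 * (N - 3) =
        ((N : ℝ) + 2 * x - 3) ^ 2 + 4 * x := by ring
    rw [hydrogenRatio, hdenom, div_pow]
    ring
  simp_rw [hf]
  exact fun x hx y hy hxy => div_le_div_of_nonneg_right
    ((monotoneOn_hydrogenRatio_sq hc).comp hshift hmaps hx hy hxy) (by norm_num)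
end

section
/- For functions u(x) = α(1+β|x|)e^{-β|x|} with β > 0 and α ∈ C nonzero on R^N, equality holds: (∫_{R^N} |Δu|^2 dx)(∫_{R^N} |∇u|^2 dx) = ((N+1)^2/4)(∫_{R^N} |∇u|^2/|x| dx)^2. -/
open MeasureTheory

/-
The function `u = f ∘ ‖·‖`, `f r = α (1 + β r) e^{-β r}`, is radial with `f' r = -α β² r e^{-β r}`.
Off the origin the Laplacian of a radial function is `f'' + (N - 1) f' / r`, which here gives
`Δu = α β² (β r - N) e^{-β r}`, while `|∇u|² = |α|² β⁴ r² e^{-2 β r}`. In polar coordinates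
all three integrals reduce to the moments `∫₀^∞ r^k e^{-2 β r} dr = k! / (2β)^{k+1}`: up to the
common factor `c = N |B₁| |α|² β⁴` they equal `(N + 1) N! / (4 (2β)^N)`, `(N + 1)! / (2β)^{N+2}` and
`N! / (2β)^{N+1}`, and the identity is arithmetic.
-/

open Set Filter Topology Module
open scoped Nat

lemma hasFDerivAt_norm_of_ne_zero {E : Type*} [NormedAddCommGroup E] [InnerProductSpace ℝ E]
    {x : E} (hx : x ≠ 0) : HasFDerivAt (‖·‖) (‖x‖⁻¹ • innerSL ℝ x) x := by
  have h := (Real.hasDerivAt_sqrt (pow_ne_zero 2 (norm_ne_zero_iff.mpr hx))).comp_hasFDerivAt x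
    (hasStrictFDerivAt_norm_sq x).hasFDerivAt
  simp only [Function.comp_def, Real.sqrt_sq (norm_nonneg _)] at h
  refine h.congr_fderiv ?_
  ext v
  simp only [one_div, mul_inv_rev, smul_apply, coe_innerSL_apply, nsmul_eq_mul, Nat.cast_ofNat,
    smul_eq_mul]
  field_simp

section Radial

variable {N : ℕ} {x : EuclideanSpace ℝ (Fin N)}

lemma hasFDerivAt_comp_norm {f : ℝ → ℂ} {f' : ℂ} (hf : HasDerivAt f f' ‖x‖) (hx : x ≠ 0) :
    HasFDerivAt (fun y : EuclideanSpace ℝ (Fin N) => f ‖y‖)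
      ((‖x‖⁻¹ • innerSL ℝ x).smulRight f') x := by
  refine (hf.hasFDerivAt.comp x (hasFDerivAt_norm_of_ne_zero hx)).congr_fderiv ?_
  ext v
  simp [mul_assoc]

lemma innerSL_apply_single_one (i : Fin N) : innerSL ℝ x (EuclideanSpace.single i 1) = x i := by
  simp [EuclideanSpace.inner_single_right]

lemma pd_comp_norm {f : ℝ → ℂ} {f' : ℂ} (hf : HasDerivAt f f' ‖x‖) (hx : x ≠ 0) (i : Fin N) :
    pd (fun y => f ‖y‖) i x = f' * x i / ‖x‖ := by
  rw [pd, (hasFDerivAt_comp_norm hf hx).fderiv]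
  simp only [ContinuousLinearMap.smulRight_apply, smul_apply, innerSL_apply_single_one, smul_eq_mul,
    Complex.real_smul, Complex.ofReal_mul, Complex.ofReal_inv]
  ring

lemma pd_comp_norm_mul_coord {g : ℝ → ℂ} {g' : ℂ} (hg : HasDerivAt g g' ‖x‖) (hx : x ≠ 0)
    (i : Fin N) : pd (fun y => g ‖y‖ * y i) i x = g' * x i ^ 2 / ‖x‖ + g ‖x‖ := by
  have hcoord : HasFDerivAt (fun y : EuclideanSpace ℝ (Fin N) => (y i : ℂ))
      (Complex.ofRealCLM.comp (EuclideanSpace.proj i)) x :=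
    (Complex.ofRealCLM.comp (EuclideanSpace.proj i)).hasFDerivAt
  rw [pd, ((hasFDerivAt_comp_norm hg hx).fun_mul hcoord).fderiv]
  simp only [add_apply, smul_apply, ContinuousLinearMap.comp_apply, PiLp.proj_apply,
    PiLp.single_eq_same, Complex.ofRealCLM_apply, Complex.ofReal_one, smul_eq_mul, mul_one,
    ContinuousLinearMap.smulRight_apply, innerSL_apply_single_one, Complex.real_smul,
    Complex.ofReal_mul, Complex.ofReal_inv]
  ring

lemma sum_sq_apply_eq_norm_sq (x : EuclideanSpace ℝ (Fin N)) : ∑ i, x i ^ 2 = ‖x‖ ^ 2 := by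
  simp [EuclideanSpace.norm_sq_eq]

lemma lap_comp_norm {f f' : ℝ → ℂ} {f'' : ℂ} (hf : ∀ᶠ r in 𝓝 ‖x‖, HasDerivAt f (f' r) r)
    (hf' : HasDerivAt f' f'' ‖x‖) (hx : x ≠ 0) :
    lap (fun y => f ‖y‖) x = f'' + (N - 1) * f' ‖x‖ / ‖x‖ := by
  have hnorm : (‖x‖ : ℂ) ≠ 0 := by simpa using hx
  have hpd (i : Fin N) : pd (fun y => f ‖y‖) i =ᶠ[𝓝 x] fun y => f' ‖y‖ / ‖y‖ * y i := by
    filter_upwards [(continuous_norm.tendsto x).eventually hf, eventually_ne_nhds hx]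
      with y hfy hy
    rw [pd_comp_norm hfy hy]
    ring
  have hquot : HasDerivAt (fun r : ℝ => f' r / r) (f'' / ‖x‖ - f' ‖x‖ / ‖x‖ ^ 2) ‖x‖ := by
    refine (hf'.fun_div (hasDerivAt_id _).ofReal_comp hnorm).congr_deriv ?_
    simp only [id, Complex.ofReal_one]
    field_simp
  have hterm (i : Fin N) : pd (pd (fun y => f ‖y‖) i) i x
      = (f'' / ‖x‖ - f' ‖x‖ / ‖x‖ ^ 2) * x i ^ 2 / ‖x‖ + f' ‖x‖ / ‖x‖ := by
    rw [pd, (hpd i).fderiv_eq, ← pd, pd_comp_norm_mul_coord hquot hx]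
  have hsum : ∑ i, ((x i : ℂ)) ^ 2 = (‖x‖ : ℂ) ^ 2 := by exact_mod_cast sum_sq_apply_eq_norm_sq x
  simp only [lap, hterm, Finset.sum_add_distrib, ← Finset.sum_div, ← Finset.mul_sum, hsum,
    Finset.sum_const, Finset.card_univ, Fintype.card_fin, nsmul_eq_mul]
  field_simp
  ring

end Radial

lemma integral_pow_mul_exp_neg_mul_Ioi (k : ℕ) {c : ℝ} (hc : 0 < c) :
    ∫ t in Ioi (0 : ℝ), t ^ k * Real.exp (-(c * t)) = k ! / c ^ (k + 1) := by
  have h := Real.integral_rpow_mul_exp_neg_mul_Ioi (a := k + 1) (by positivity) hc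
  rw [add_sub_cancel_right, Real.Gamma_nat_eq_factorial, ← Nat.cast_succ, Real.rpow_natCast,
    div_pow, one_pow, one_div_mul_eq_div] at h
  simpa only [Real.rpow_natCast] using h

lemma integrableOn_pow_mul_exp_neg_mul_Ioi (k : ℕ) {c : ℝ} (hc : 0 < c) :
    IntegrableOn (fun t : ℝ => t ^ k * Real.exp (-(c * t))) (Ioi 0) :=
  .of_integral_ne_zero (by rw [integral_pow_mul_exp_neg_mul_Ioi k hc]; positivity)

section Hydrogen

variable (α : ℂ) (β : ℝ)

noncomputable def hydrogenProfile (r : ℝ) : ℂ :=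
  α * (1 + β * r) * Complex.exp (-β * r)

lemma hasDerivAt_cexp_neg_mul (r : ℝ) :
    HasDerivAt (fun r : ℝ => Complex.exp (-β * r)) (-β * Complex.exp (-β * r)) r := by
  simpa [mul_comm] using (((hasDerivAt_id r).ofReal_comp).const_mul (-β : ℂ)).cexp

lemma hasDerivAt_hydrogenProfile (r : ℝ) :
    HasDerivAt (hydrogenProfile α β) (-α * β ^ 2 * r * Complex.exp (-β * r)) r := by
  have hlin : HasDerivAt (fun r : ℝ => α * (1 + β * r)) (α * β) r := by
    simpa using (((hasDerivAt_id r).ofReal_comp.const_mul (β : ℂ)).const_add 1).const_mul α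
  refine (hlin.mul (hasDerivAt_cexp_neg_mul β r)).congr_deriv ?_
  ring

lemma hasDerivAt_hydrogenProfile_deriv (r : ℝ) :
    HasDerivAt (fun r : ℝ => -α * β ^ 2 * r * Complex.exp (-β * r))
      (α * β ^ 2 * (β * r - 1) * Complex.exp (-β * r)) r := by
  have hlin : HasDerivAt (fun r : ℝ => -α * β ^ 2 * r) (-α * β ^ 2) r := by
    simpa only [id, Complex.ofReal_one, mul_one]
      using (hasDerivAt_id r).ofReal_comp.const_mul (-α * β ^ 2)
  refine (hlin.mul (hasDerivAt_cexp_neg_mul β r)).congr_deriv ?_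
  ring

lemma norm_cexp_neg_mul_ofReal_sq (r : ℝ) :
    ‖Complex.exp (-β * r)‖ ^ 2 = Real.exp (-(2 * β * r)) := by
  rw [Complex.norm_exp, ← Real.exp_nat_mul]
  simp only [Nat.cast_ofNat, neg_mul, Complex.neg_re, Complex.mul_re, Complex.ofReal_re,
    Complex.ofReal_im, mul_zero, sub_zero]
  ring_nf

variable {N : ℕ} {x : EuclideanSpace ℝ (Fin N)}

lemma pd_hydrogenProfile (hx : x ≠ 0) (i : Fin N) :
    pd (fun y => hydrogenProfile α β ‖y‖) i x = -α * β ^ 2 * Complex.exp (-β * ‖x‖) * x i := by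
  have hnorm : (‖x‖ : ℂ) ≠ 0 := by simpa using hx
  rw [pd_comp_norm (hasDerivAt_hydrogenProfile α β _) hx]
  field_simp

lemma lap_hydrogenProfile (hx : x ≠ 0) :
    lap (fun y => hydrogenProfile α β ‖y‖) x =
      α * β ^ 2 * (β * ‖x‖ - N) * Complex.exp (-β * ‖x‖) := by
  have hnorm : (‖x‖ : ℂ) ≠ 0 := by simpa using hx
  rw [lap_comp_norm (.of_forall (hasDerivAt_hydrogenProfile α β))
    (hasDerivAt_hydrogenProfile_deriv α β _) hx]
  field_simp
  ring

lemma gradNormSq_hydrogenProfile (hx : x ≠ 0) :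
    gradNormSq (fun y => hydrogenProfile α β ‖y‖) x =
      ‖α‖ ^ 2 * β ^ 4 * (‖x‖ ^ 2 * Real.exp (-(2 * β * ‖x‖))) := by
  simp only [gradNormSq, pd_hydrogenProfile α β hx, norm_mul, norm_neg, norm_pow, mul_pow,
    norm_cexp_neg_mul_ofReal_sq, Complex.norm_real, Real.norm_eq_abs, sq_abs, ← Finset.mul_sum,
    sum_sq_apply_eq_norm_sq]
  ring

lemma norm_lap_hydrogenProfile_sq (hx : x ≠ 0) :
    ‖lap (fun y => hydrogenProfile α β ‖y‖) x‖ ^ 2 =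
      ‖α‖ ^ 2 * β ^ 4 * ((β * ‖x‖ - N) ^ 2 * Real.exp (-(2 * β * ‖x‖))) := by
  rw [lap_hydrogenProfile α β hx,
    show (β : ℂ) * ‖x‖ - N = ((β * ‖x‖ - N : ℝ) : ℂ) by push_cast; rfl]
  simp only [norm_mul, norm_pow, mul_pow, norm_cexp_neg_mul_ofReal_sq, Complex.norm_real,
    Real.norm_eq_abs, sq_abs]
  ring

end Hydrogen

lemma integral_congr_of_forall_ne {X E : Type*} [MeasurableSpace X] [NormedAddCommGroup E]
    [NormedSpace ℝ E] {μ : Measure X} [NullSingletonClass μ] {f g : X → E} (a : X)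
    (h : ∀ x ≠ a, f x = g x) : ∫ x, f x ∂μ = ∫ x, g x ∂μ :=
  integral_congr_ae (by filter_upwards [μ.ae_ne a] with x hx using h x hx)

section Integrals

variable {N : ℕ} [NeZero N]

lemma integral_norm_pow_mul_exp_neg_mul_norm (k : ℕ) {c : ℝ} (hc : 0 < c) :
    ∫ x : EuclideanSpace ℝ (Fin N), ‖x‖ ^ k * Real.exp (-(c * ‖x‖)) =
      N * volume.real (Metric.ball (0 : EuclideanSpace ℝ (Fin N)) 1) *
        ((N + k - 1)! / c ^ (N + k)) := by
  have hN : 1 ≤ N := NeZero.one_le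
  rw [integral_fun_norm_addHaar volume fun r => r ^ k * Real.exp (-(c * r))]
  simp only [finrank_euclideanSpace_fin, smul_eq_mul, nsmul_eq_mul, ← mul_assoc, ← pow_add]
  rw [integral_pow_mul_exp_neg_mul_Ioi _ hc, show N - 1 + k = N + k - 1 by omega,
    show N + k - 1 + 1 = N + k by omega, mul_assoc]

lemma integrable_norm_pow_mul_exp_neg_mul_norm (k : ℕ) {c : ℝ} (hc : 0 < c) :
    Integrable fun x : EuclideanSpace ℝ (Fin N) => ‖x‖ ^ k * Real.exp (-(c * ‖x‖)) := by
  refine (integrable_fun_norm_addHaar volume (f := fun r => r ^ k * Real.exp (-(c * r)))).mpr ?_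
  simpa only [smul_eq_mul, ← mul_assoc, ← pow_add]
    using integrableOn_pow_mul_exp_neg_mul_Ioi _ hc

variable (α : ℂ) {β : ℝ}

lemma integral_gradNormSq_hydrogenProfile (hβ : 0 < β) :
    ∫ x, gradNormSq (fun y : EuclideanSpace ℝ (Fin N) => hydrogenProfile α β ‖y‖) x =
      N * volume.real (Metric.ball (0 : EuclideanSpace ℝ (Fin N)) 1) * ‖α‖ ^ 2 * β ^ 4 *
        ((N + 1)! / (2 * β) ^ (N + 2)) := by
  rw [integral_congr_of_forall_ne 0 fun x hx => gradNormSq_hydrogenProfile α β hx,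
    integral_const_mul, integral_norm_pow_mul_exp_neg_mul_norm 2 (by positivity),
    Nat.add_succ_sub_one]
  ring

lemma integral_gradNormSq_hydrogenProfile_div_norm (hβ : 0 < β) :
    ∫ x, gradNormSq (fun y : EuclideanSpace ℝ (Fin N) => hydrogenProfile α β ‖y‖) x / ‖x‖ =
      N * volume.real (Metric.ball (0 : EuclideanSpace ℝ (Fin N)) 1) * ‖α‖ ^ 2 * β ^ 4 *
        (N ! / (2 * β) ^ (N + 1)) := by
  have hdiv (x : EuclideanSpace ℝ (Fin N)) (hx : x ≠ 0) :
      gradNormSq (fun y => hydrogenProfile α β ‖y‖) x / ‖x‖ =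
        ‖α‖ ^ 2 * β ^ 4 * (‖x‖ ^ 1 * Real.exp (-(2 * β * ‖x‖))) := by
    rw [gradNormSq_hydrogenProfile α β hx]
    field_simp [norm_ne_zero_iff.mpr hx]
  rw [integral_congr_of_forall_ne 0 hdiv, integral_const_mul,
    integral_norm_pow_mul_exp_neg_mul_norm 1 (by positivity), Nat.add_sub_cancel]
  ring

lemma integral_norm_lap_hydrogenProfile_sq (hβ : 0 < β) :
    ∫ x, ‖lap (fun y : EuclideanSpace ℝ (Fin N) => hydrogenProfile α β ‖y‖) x‖ ^ 2 =
      N * volume.real (Metric.ball (0 : EuclideanSpace ℝ (Fin N)) 1) * ‖α‖ ^ 2 * β ^ 4 *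
        ((N + 1) * N ! / (4 * (2 * β) ^ N)) := by
  have h2β : 0 < 2 * β := by positivity
  have hint (k : ℕ) := integrable_norm_pow_mul_exp_neg_mul_norm (N := N) k h2β
  have hexpand (x : EuclideanSpace ℝ (Fin N)) :
      (β * ‖x‖ - N) ^ 2 * Real.exp (-(2 * β * ‖x‖)) =
        β ^ 2 * (‖x‖ ^ 2 * Real.exp (-(2 * β * ‖x‖)))
          - 2 * β * N * (‖x‖ ^ 1 * Real.exp (-(2 * β * ‖x‖)))
          + N ^ 2 * (‖x‖ ^ 0 * Real.exp (-(2 * β * ‖x‖))) := by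
    ring
  rw [integral_congr_of_forall_ne 0 fun x hx => norm_lap_hydrogenProfile_sq α β hx,
    integral_const_mul]
  simp_rw [hexpand]
  rw [integral_add ?_ ((hint 0).const_mul _),
    integral_sub ((hint 2).const_mul _) ((hint 1).const_mul _), integral_const_mul,
    integral_const_mul, integral_const_mul, integral_norm_pow_mul_exp_neg_mul_norm 2 h2β,
    integral_norm_pow_mul_exp_neg_mul_norm 1 h2β, integral_norm_pow_mul_exp_neg_mul_norm 0 h2β,
    Nat.add_succ_sub_one, Nat.add_sub_cancel, add_zero]
  · have hfac_pred : ((N - 1)! : ℝ) = N ! / N := by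
      rw [eq_div_iff (NeZero.ne _), mul_comm]
      exact_mod_cast Nat.mul_factorial_pred (NeZero.ne N)
    rw [hfac_pred]
    push_cast [Nat.factorial_succ]
    field_simp
    ring
  · exact ((hint 2).const_mul _).sub ((hint 1).const_mul _)

end Integrals

theorem second_order_HyUP_equality_general {N : ℕ} (hN : 1 ≤ N)
    (α : ℂ) (β : ℝ) (hβ : 0 < β)
    (u : EuclideanSpace ℝ (Fin N) → ℂ)
    (hu : u = fun x => α * (1 + (β : ℂ) * (‖x‖ : ℂ)) * Complex.exp (-(β : ℂ) * (‖x‖ : ℂ))) :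
    (∫ x, ‖lap u x‖ ^ 2) * (∫ x, gradNormSq u x) =
      ((N : ℝ) + 1) ^ 2 / 4 * (∫ x, gradNormSq u x / ‖x‖) ^ 2 := by
  have : NeZero N := ⟨by omega⟩
  have hu' : u = fun x => hydrogenProfile α β ‖x‖ := hu
  subst hu'
  rw [integral_norm_lap_hydrogenProfile_sq α hβ, integral_gradNormSq_hydrogenProfile α hβ,
    integral_gradNormSq_hydrogenProfile_div_norm α hβ]
  push_cast [Nat.factorial_succ]
  field_simp
  ring

theorem second_order_HyUP_equality {N : ℕ} (hN : 1 ≤ N)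
    (α : ℂ) (hα : α ≠ 0) (β : ℝ) (hβ : 0 < β)
    (u : EuclideanSpace ℝ (Fin N) → ℂ)
    (hu : u = fun x => α * (1 + (β : ℂ) * (‖x‖ : ℂ)) * Complex.exp (-(β : ℂ) * (‖x‖ : ℂ))) :
    (∫ x, ‖lap u x‖ ^ 2) * (∫ x, gradNormSq u x) =
      ((N : ℝ) + 1) ^ 2 / 4 * (∫ x, gradNormSq u x / ‖x‖) ^ 2 :=
  second_order_HyUP_equality_general hN α β hβ u hu
end
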